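/- There exists an absolute constant C > 0 with the following property. For all reals Q ≥ 2 and D with 1 ≤ D ≤ Q^{1/2}: Σ_{Q ≤ q < 2Q} σ_D(q)² ≤ C Q log(2D), where the sum is over integers q with Q ≤ q < 2Q and σ_D(q) = #{d : d | q, D ≤ d ≤ 8D}. -/

import Mathlib

/-!
Expanding the square, `∑ σ_D(q)²` counts the pairs `d₁, d₂ ∈ [D, 8D]` of divisors of `q`, and a
fixed pair divides at most `2Q / lcm(d₁, d₂)` of the `q < 2Q`. Now
`1 / lcm(d₁, d₂) = gcd(d₁, d₂) / (d₁ d₂) ≤ ∑_{g ∣ d₁, g ∣ d₂} g / (d₁ d₂)`, and regrouping by `g`,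
`∑ 1 / lcm(d₁, d₂) ≤ ∑_{g ≤ 8D} g (∑_{g ∣ d ∈ [D, 8D]} 1 / d)² ≤ ∑_{g ≤ 8D} (1 + log 8)² / g`,
which is `O(log 2D)` by the harmonic bound.
-/

/-- `σ_D(q)` is the number of divisors `d` of `q` with `D ≤ d ≤ 8D`. -/
noncomputable def sigmaD (D : ℝ) (q : ℕ) : ℕ :=
  (q.divisors.filter (fun d : ℕ => D ≤ (d : ℝ) ∧ (d : ℝ) ≤ 8 * D)).card

open Finset Real

lemma sum_Ioc_inv_le_log_sub_log {m n : ℕ} (hm : 0 < m) (hmn : m ≤ n) :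
    ∑ a ∈ Ioc m n, (a : ℝ)⁻¹ ≤ log n - log m := by
  induction n, hmn using Nat.le_induction with
  | base => simp
  | succ n hmn ih =>
    have hn : (0 : ℝ) < n := by exact_mod_cast hm.trans_le hmn
    have step : ((n + 1 : ℕ) : ℝ)⁻¹ ≤ log (n + 1 : ℕ) - log n := by
      have h := one_sub_inv_le_log_of_pos (x := ((n + 1 : ℕ) : ℝ) / n) (by positivity)
      rw [log_div (by positivity) hn.ne', inv_div] at h
      convert h using 1
      push_cast
      field_simp
      ring
    rw [sum_Ioc_succ_top (by omega)]
    linarith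

lemma sum_Icc_ceil_floor_inv_le {y c : ℝ} (hy : 0 < y) (hc : 1 ≤ c) :
    ∑ a ∈ Icc ⌈y⌉₊ ⌊c * y⌋₊, (a : ℝ)⁻¹ ≤ 1 + log c := by
  set m := ⌈y⌉₊
  set n := ⌊c * y⌋₊
  have hm : 0 < m := Nat.ceil_pos.mpr hy
  rcases lt_or_ge n m with hnm | hmn
  · rw [Icc_eq_empty_of_lt hnm, sum_empty]
    linarith [log_nonneg hc]
  have hlog : log n ≤ log c + log m := by
    rw [← log_mul (by positivity) (by positivity)]
    apply log_le_log (by exact_mod_cast hm.trans_le hmn)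
    calc (n : ℝ) ≤ c * y := Nat.floor_le (by positivity)
      _ ≤ c * m := by gcongr; exact Nat.le_ceil y
  have hm_inv : (m : ℝ)⁻¹ ≤ 1 := inv_le_one_of_one_le₀ (by exact_mod_cast hm)
  rw [Icc_eq_cons_Ioc hmn, sum_cons]
  linarith [sum_Ioc_inv_le_log_sub_log hm hmn]

lemma sum_filter_dvd_Icc_ceil_floor_inv_le {x c : ℝ} (hx : 0 < x) (hc : 1 ≤ c) {g : ℕ}
    (hg : 0 < g) :
    ∑ d ∈ Icc ⌈x⌉₊ ⌊c * x⌋₊ with g ∣ d, (d : ℝ)⁻¹ ≤ (1 + log c) / g := by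
  have hg' : (0 : ℝ) < g := by exact_mod_cast hg
  have hsub : {d ∈ Icc ⌈x⌉₊ ⌊c * x⌋₊ | g ∣ d} ⊆
      (Icc ⌈x / g⌉₊ ⌊c * (x / g)⌋₊).image (g * ·) := by
    intro d hd
    obtain ⟨hd, a, rfl⟩ := mem_filter.mp hd
    rw [mem_Icc, Nat.ceil_le, Nat.le_floor_iff (by positivity)] at hd
    push_cast at hd
    refine mem_image.mpr ⟨a, mem_Icc.mpr ⟨?_, ?_⟩, rfl⟩
    · rw [Nat.ceil_le, div_le_iff₀ hg']
      linarith
    · rw [Nat.le_floor_iff (by positivity), mul_div_assoc', le_div_iff₀ hg']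
      linarith
  calc ∑ d ∈ Icc ⌈x⌉₊ ⌊c * x⌋₊ with g ∣ d, (d : ℝ)⁻¹
      ≤ ∑ d ∈ (Icc ⌈x / g⌉₊ ⌊c * (x / g)⌋₊).image (g * ·), (d : ℝ)⁻¹ :=
        sum_le_sum_of_subset_of_nonneg hsub fun _ _ _ => by positivity
    _ = (g : ℝ)⁻¹ * ∑ a ∈ Icc ⌈x / g⌉₊ ⌊c * (x / g)⌋₊, (a : ℝ)⁻¹ := by
        rw [sum_image fun a _ b _ h => Nat.eq_of_mul_eq_mul_left hg h, mul_sum]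
        exact sum_congr rfl fun a _ => by push_cast; ring
    _ ≤ (g : ℝ)⁻¹ * (1 + log c) := by
        gcongr
        exact sum_Icc_ceil_floor_inv_le (by positivity) hc
    _ = (1 + log c) / g := by ring

lemma sum_Icc_one_floor_inv_le {y : ℝ} (hy : 1 ≤ y) :
    ∑ g ∈ Icc 1 ⌊y⌋₊, (g : ℝ)⁻¹ ≤ 1 + log y := by
  simpa [harmonic_eq_sum_Icc] using harmonic_floor_le_one_add_log y hy

lemma inv_lcm_eq_gcd_mul_inv_mul_inv (a b : ℕ) :
    ((a.lcm b : ℕ) : ℝ)⁻¹ = a.gcd b * ((a : ℝ)⁻¹ * (b : ℝ)⁻¹) := by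
  rcases eq_or_ne (a.gcd b) 0 with hg | hg
  · obtain ⟨rfl, rfl⟩ := Nat.gcd_eq_zero_iff.mp hg
    simp
  have h : (a.gcd b : ℝ) * a.lcm b = a * b := by exact_mod_cast Nat.gcd_mul_lcm a b
  replace hg : (a.gcd b : ℝ) ≠ 0 := by exact_mod_cast hg
  rw [← mul_inv, ← h, mul_inv, ← mul_assoc, mul_inv_cancel₀ hg, one_mul]

lemma sum_inv_lcm_le_sum_mul_sq (W : Finset ℕ) {M : ℕ} (hW : ∀ d ∈ W, 0 < d ∧ d ≤ M) :
    ∑ p ∈ W ×ˢ W, ((p.1.lcm p.2 : ℕ) : ℝ)⁻¹ ≤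
      ∑ g ∈ Icc 1 M, (g : ℝ) * (∑ d ∈ W with g ∣ d, (d : ℝ)⁻¹) ^ 2 := by
  calc ∑ p ∈ W ×ˢ W, ((p.1.lcm p.2 : ℕ) : ℝ)⁻¹
      ≤ ∑ p ∈ W ×ˢ W, ∑ g ∈ Icc 1 M with g ∣ p.1 ∧ g ∣ p.2,
          (g : ℝ) * ((p.1 : ℝ)⁻¹ * (p.2 : ℝ)⁻¹) := by
        refine sum_le_sum fun p hp => ?_
        obtain ⟨h1, hM⟩ := hW _ (mem_product.mp hp).1
        rw [inv_lcm_eq_gcd_mul_inv_mul_inv]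
        refine single_le_sum (f := fun g : ℕ => (g : ℝ) * ((p.1 : ℝ)⁻¹ * (p.2 : ℝ)⁻¹))
          (fun _ _ => by positivity) ?_
        simp only [mem_filter, mem_Icc]
        exact ⟨⟨Nat.gcd_pos_of_pos_left _ h1, (Nat.gcd_le_left _ h1).trans hM⟩,
          Nat.gcd_dvd_left _ _, Nat.gcd_dvd_right _ _⟩
    _ = ∑ g ∈ Icc 1 M, ∑ p ∈ {d ∈ W | g ∣ d} ×ˢ {d ∈ W | g ∣ d},
          (g : ℝ) * ((p.1 : ℝ)⁻¹ * (p.2 : ℝ)⁻¹) :=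
        sum_comm' (fun p g => by simp only [mem_filter, mem_product, mem_Icc]; tauto)
    _ = ∑ g ∈ Icc 1 M, (g : ℝ) * (∑ d ∈ W with g ∣ d, (d : ℝ)⁻¹) ^ 2 := by
        simp_rw [← mul_sum, sum_product, ← sum_mul_sum, sq]

lemma sum_card_filter_sq_eq_sum_card_filter_and {α β : Type*} (A : Finset α) (W : Finset β)
    (r : β → α → Prop) [∀ b a, Decidable (r b a)] :
    ∑ a ∈ A, #{b ∈ W | r b a} ^ 2 = ∑ p ∈ W ×ˢ W, #{a ∈ A | r p.1 a ∧ r p.2 a} := by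
  have := sum_card_bipartiteAbove_eq_sum_card_bipartiteBelow (s := A) (t := W ×ˢ W)
    (r := fun a p => r p.1 a ∧ r p.2 a)
  refine (sum_congr rfl fun a _ => ?_).trans this
  rw [bipartiteAbove, filter_product (fun b => r b a) (fun b => r b a), card_product, sq]

lemma card_filter_dvd_le_of_subset_Icc_floor {x : ℝ} (hx : 0 ≤ x) {s : Finset ℕ}
    (hs : s ⊆ Icc 1 ⌊x⌋₊) (m : ℕ) : (#{q ∈ s | m ∣ q} : ℝ) ≤ x / m :=
  calc (#{q ∈ s | m ∣ q} : ℝ) ≤ #{q ∈ Ioc 0 ⌊x⌋₊ | m ∣ q} := by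
        rw [← Icc_add_one_left_eq_Ioc, zero_add]
        exact_mod_cast card_le_card (filter_subset_filter _ hs)
    _ = ((⌊x⌋₊ / m : ℕ) : ℝ) := by rw [Nat.Ioc_filter_dvd_card_eq_div]
    _ ≤ (⌊x⌋₊ : ℝ) / m := Nat.cast_div_le
    _ ≤ x / m := by gcongr; exact Nat.floor_le hx

lemma sigmaD_eq_card_filter_dvd {D : ℝ} (hD : 0 ≤ D) {q : ℕ} (hq : q ≠ 0) :
    sigmaD D q = #{d ∈ Icc ⌈D⌉₊ ⌊8 * D⌋₊ | d ∣ q} := by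
  unfold sigmaD
  congr 1
  ext d
  simp only [mem_filter, Nat.mem_divisors, ne_eq, hq, not_false_eq_true, and_true, mem_Icc,
    Nat.ceil_le, Nat.le_floor_iff (by positivity : 0 ≤ 8 * D)]
  tauto

lemma sum_inv_lcm_Icc_ceil_floor_le {x c : ℝ} (hx : 0 < x) (hc : 1 ≤ c) (hcx : 1 ≤ c * x) :
    ∑ p ∈ Icc ⌈x⌉₊ ⌊c * x⌋₊ ×ˢ Icc ⌈x⌉₊ ⌊c * x⌋₊, ((p.1.lcm p.2 : ℕ) : ℝ)⁻¹ ≤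
      (1 + log c) ^ 2 * (1 + log (c * x)) := by
  have hW : ∀ d ∈ Icc ⌈x⌉₊ ⌊c * x⌋₊, 0 < d ∧ d ≤ ⌊c * x⌋₊ := fun d hd =>
    ⟨(Nat.ceil_pos.mpr hx).trans_le (mem_Icc.mp hd).1, (mem_Icc.mp hd).2⟩
  calc _ ≤ ∑ g ∈ Icc 1 ⌊c * x⌋₊,
          (g : ℝ) * (∑ d ∈ Icc ⌈x⌉₊ ⌊c * x⌋₊ with g ∣ d, (d : ℝ)⁻¹) ^ 2 :=
        sum_inv_lcm_le_sum_mul_sq _ hW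
    _ ≤ ∑ g ∈ Icc 1 ⌊c * x⌋₊, (1 + log c) ^ 2 * (g : ℝ)⁻¹ := by
        refine sum_le_sum fun g hg => ?_
        have hg : (0 : ℝ) < g := by exact_mod_cast (mem_Icc.mp hg).1
        calc (g : ℝ) * (∑ d ∈ Icc ⌈x⌉₊ ⌊c * x⌋₊ with g ∣ d, (d : ℝ)⁻¹) ^ 2
            ≤ g * ((1 + log c) / g) ^ 2 := by
              gcongr
              exact sum_filter_dvd_Icc_ceil_floor_inv_le hx hc (by exact_mod_cast hg)
          _ = (1 + log c) ^ 2 * (g : ℝ)⁻¹ := by field_simp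
    _ = (1 + log c) ^ 2 * ∑ g ∈ Icc 1 ⌊c * x⌋₊, (g : ℝ)⁻¹ := (mul_sum _ _ _).symm
    _ ≤ (1 + log c) ^ 2 * (1 + log (c * x)) := by
        gcongr
        exact sum_Icc_one_floor_inv_le hcx

lemma one_add_log_eight_sq_mul_le {D : ℝ} (hD : 1 ≤ D) :
    (1 + log 8) ^ 2 * (1 + log (8 * D)) ≤ 80 * log (2 * D) := by
  have hlog2 := log_two_lt_d9
  have hlog2' := log_two_gt_d9
  have hlog8 : log 8 = 3 * log 2 := by
    rw [show (8 : ℝ) = 2 ^ 3 by norm_num, log_pow]; push_cast; ring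
  have hlog8D : log (8 * D) = 2 * log 2 + log (2 * D) := by
    rw [show 8 * D = 2 ^ 2 * (2 * D) by ring, log_mul (by positivity) (by positivity), log_pow]
    push_cast; ring
  have hlog2D : log 2 ≤ log (2 * D) := log_le_log (by norm_num) (by linarith)
  have hsq : (1 + log 8) ^ 2 ≤ 10 := by rw [hlog8]; nlinarith
  calc (1 + log 8) ^ 2 * (1 + log (8 * D)) ≤ 10 * (1 + log (8 * D)) := by
        gcongr
        rw [hlog8D]; linarith
    _ ≤ 80 * log (2 * D) := by rw [hlog8D]; linarith

/-- There is an absolute constant `C > 0` such that for all reals `Q ≥ 2` and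
`1 ≤ D ≤ Q^{1/2}`: `∑_{Q ≤ q < 2Q} σ_D(q)² ≤ C Q log(2D)`. -/
theorem divisor_count_second_moment :
    ∃ C : ℝ, 0 < C ∧
      ∀ Q D : ℝ, 2 ≤ Q → 1 ≤ D → D ≤ Q ^ ((1 : ℝ) / 2) →
        ∑ q ∈ (Finset.Icc 1 ⌊2 * Q⌋₊).filter
            (fun q : ℕ => Q ≤ (q : ℝ) ∧ (q : ℝ) < 2 * Q),
          (sigmaD D q : ℝ) ^ 2 ≤ C * Q * Real.log (2 * D) := by
  refine ⟨160, by norm_num, fun Q D hQ hD _ => ?_⟩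
  set W := Icc ⌈D⌉₊ ⌊8 * D⌋₊
  set A := (Icc 1 ⌊2 * Q⌋₊).filter (fun q : ℕ => Q ≤ (q : ℝ) ∧ (q : ℝ) < 2 * Q)
  calc ∑ q ∈ A, (sigmaD D q : ℝ) ^ 2 = ∑ q ∈ A, (#{d ∈ W | d ∣ q} : ℝ) ^ 2 :=
        sum_congr rfl fun q hq => by
          rw [sigmaD_eq_card_filter_dvd (by linarith)
            (Nat.one_le_iff_ne_zero.mp (mem_Icc.mp (mem_filter.mp hq).1).1)]
    _ = ∑ p ∈ W ×ˢ W, (#{q ∈ A | p.1 ∣ q ∧ p.2 ∣ q} : ℝ) := by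
        exact_mod_cast sum_card_filter_sq_eq_sum_card_filter_and A W (· ∣ ·)
    _ ≤ ∑ p ∈ W ×ˢ W, 2 * Q * ((p.1.lcm p.2 : ℕ) : ℝ)⁻¹ := by
        refine sum_le_sum fun p _ => ?_
        simp_rw [← Nat.lcm_dvd_iff, ← div_eq_mul_inv]
        exact card_filter_dvd_le_of_subset_Icc_floor (by linarith) (filter_subset _ _) _
    _ = 2 * Q * ∑ p ∈ W ×ˢ W, ((p.1.lcm p.2 : ℕ) : ℝ)⁻¹ := (mul_sum _ _ _).symm
    _ ≤ 2 * Q * (80 * log (2 * D)) := by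
        gcongr
        exact (sum_inv_lcm_Icc_ceil_floor_le (by linarith) (by norm_num) (by linarith)).trans
          (one_add_log_eight_sq_mul_le hD)
    _ = 160 * Q * log (2 * D) := by ring
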